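/- For any d ≥ 2 and 0 < β ≤ 1, the limits u_∞(d,β) = lim_{n→∞} u_n(d,β) and ℓ_∞(d,β) = lim_{n→∞} ℓ_n(d,β) exist, and the pair (x,y) = (u_∞(d,β), ℓ_∞(d,β)) is a solution of the system f_u(d,β,x,y) = x and f_ℓ(d,β,x,y) = y satisfying 0 < y ≤ 1 − x − y ≤ x < 1. -/
import Mathlib


open Filter

/-- Weight of a configuration of the `q`-state Potts model with parameter `β`
on the `d`-ary tree of height `n`.  A vertex of the tree is a pair of a depth
`k ≤ n` and a path of length `k`; the parent of a vertex of depth `k+1` is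
obtained by dropping the last step of its path.  The weight is
`β ^ (number of monochromatic edges)`. -/
noncomputable def treeWeight (q d n : ℕ) (β : ℝ)
    (σ : (Σ k : Fin (n + 1), (Fin k → Fin d)) → Fin q) : ℝ :=
  β ^ (Finset.univ.filter (fun p : Σ k : Fin n, (Fin (k + 1) → Fin d) =>
        σ ⟨p.1.succ, p.2⟩ = σ ⟨p.1.castSucc, fun i => p.2 i.castSucc⟩)).card

/-- The conditional probability, under the Gibbs distribution of the `q`-state
Potts model with parameter `β` on the `d`-ary tree `𝕋_{d,n}` of height `n`,
that the root receives colour `c` given that the leaves (the depth-`n`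
vertices) are coloured according to `τ`. -/
noncomputable def condRootProb (q d n : ℕ) (β : ℝ)
    (τ : (Fin n → Fin d) → Fin q) (c : Fin q) : ℝ :=
  (∑ σ ∈ Finset.univ.filter
      (fun σ : (Σ k : Fin (n + 1), (Fin k → Fin d)) → Fin q =>
        σ ⟨⟨0, n.succ_pos⟩, Fin.elim0⟩ = c ∧
          ∀ f : Fin n → Fin d, σ ⟨⟨n, n.lt_succ_self⟩, f⟩ = τ f),
      treeWeight q d n β σ) /
  (∑ σ ∈ Finset.univ.filter
      (fun σ : (Σ k : Fin (n + 1), (Fin k → Fin d)) → Fin q =>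
        ∀ f : Fin n → Fin d, σ ⟨⟨n, n.lt_succ_self⟩, f⟩ = τ f),
      treeWeight q d n β σ)

/-- `γ(q,β,d,n)`: the maximum, over boundary configurations `τ` and colours
`c₁, c₂`, of the ratio of conditional root marginals. -/
noncomputable def pottsGamma (q d : ℕ) (β : ℝ) (n : ℕ) : ℝ :=
  ⨆ τ : (Fin n → Fin d) → Fin q, ⨆ c₁ : Fin q, ⨆ c₂ : Fin q,
    condRootProb q d n β τ c₁ / condRootProb q d n β τ c₂

/-- The function `g_{c₁,c₂,β}` of the two-step recursion. -/
noncomputable def gfun (q d : ℕ) (β : ℝ) (c₁ c₂ : Fin q) (p : Fin d → Fin q → ℝ) : ℝ :=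
  ∏ k : Fin d,
    (1 - ((1 - β) * (p k c₁ - p k c₂)) /
      (β * p k c₂ + ∑ c ∈ Finset.univ.erase c₂, p k c))

/-- The function `h_{c₁,c₂,β}` of the two-step recursion. -/
noncomputable def hfun (q d : ℕ) (β : ℝ) (c₁ c₂ : Fin q) (p : Fin d → Fin q → ℝ) : ℝ :=
  1 + ((1 - β) * (1 - gfun q d β c₁ c₂ p)) /
    (β + ∑ c ∈ Finset.univ.erase c₂, gfun q d β c c₂ p)

/-- `Δ_α`: probability vectors on `q` colours whose entries are within a
factor `α` of each other. -/
def simplexAlpha (q : ℕ) (α : ℝ) : Set (Fin q → ℝ) :=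
  {p | (∀ i, 0 ≤ p i) ∧ (∑ i, p i) = 1 ∧ ∀ i j, p i ≤ α * p j}

/-- `M_{α,c₁,c₂,β}`: the maximum of `h_{c₁,c₂,β}` over `Δ_α^d`. -/
noncomputable def Mval (q d : ℕ) (α β : ℝ) (c₁ c₂ : Fin q) : ℝ :=
  sSup ((hfun q d β c₁ c₂) '' {p | ∀ k, p k ∈ simplexAlpha q α})

/-- `Ex_c(α)`: vectors with entries in `{1, α}`, whose `c`-entry is `1`
and with at least one entry equal to `α`. -/
def exSet (q : ℕ) (c : Fin q) (α : ℝ) : Set (Fin q → ℝ) :=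
  {p | (∀ c', p c' = 1 ∨ p c' = α) ∧ p c = 1 ∧ ∃ c', p c' = α}

/-- The function `f_u(d,β,x,y)` from the one-step analysis. -/
noncomputable def fU (d : ℕ) (β x y : ℝ) : ℝ :=
  (1 - (1 - β) * y) ^ d /
    ((1 - (1 - β) * y) ^ d +
      2 * (1 - (1 - β) * x) ^ ((d : ℝ) / 2) *
        (1 - (1 - β) * (1 - x - y)) ^ ((d : ℝ) / 2))

/-- The function `f_ℓ(d,β,x,y)` from the one-step analysis. -/
noncomputable def fL (d : ℕ) (β x y : ℝ) : ℝ :=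
  (1 - (1 - β) * x) ^ d /
    ((1 - (1 - β) * x) ^ d + (1 - (1 - β) * y) ^ d +
      (1 - (1 - β) * (1 - x - y)) ^ d)

/-- The pair of sequences `(u_n(d,β), ℓ_n(d,β))`, defined by
`u_0 = 1`, `ℓ_0 = 0`, `u_{n+1} = f_u(d,β,u_n,ℓ_n)`, `ℓ_{n+1} = f_ℓ(d,β,u_n,ℓ_n)`. -/
noncomputable def ulSeq (d : ℕ) (β : ℝ) : ℕ → ℝ × ℝ
  | 0 => (1, 0)
  | n + 1 =>
      (fU d β (ulSeq d β n).1 (ulSeq d β n).2,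
       fL d β (ulSeq d β n).1 (ulSeq d β n).2)

set_option maxHeartbeats 1000000 in
private lemma pott_pow_diff_lower (d : ℕ) {p q : ℝ} (hp : 0 ≤ p) (hpq : p ≤ q) :
    (d : ℝ) * p ^ (d-1) * (q - p) ≤ q ^ d - p ^ d := by
  have h := geom_sum₂_mul q p d
  calc (d:ℝ) * p ^ (d-1) * (q-p) = (∑ _i ∈ Finset.range d, p ^ (d-1)) * (q - p) := by
        rw [Finset.sum_const, Finset.card_range]; ring
    _ ≤ (∑ i ∈ Finset.range d, q ^ i * p ^ (d - 1 - i)) * (q - p) := by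
        apply mul_le_mul_of_nonneg_right _ (by linarith)
        apply Finset.sum_le_sum
        intro i hi
        simp only [Finset.mem_range] at hi
        calc p ^ (d-1) = p ^ i * p ^ (d-1-i) := by
              rw [← pow_add]; congr 1; omega
          _ ≤ q ^ i * p ^ (d-1-i) := by
              exact mul_le_mul_of_nonneg_right (pow_le_pow_left₀ hp hpq i) (pow_nonneg hp _)
    _ = q ^ d - p ^ d := h

set_option maxHeartbeats 1000000 in
private lemma pott_pow_diff_upper (d : ℕ) {p q : ℝ} (hp : 0 ≤ p) (hpq : p ≤ q) :
    q ^ d - p ^ d ≤ (d : ℝ) * q ^ (d-1) * (q - p) := by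
  have h := geom_sum₂_mul q p d
  calc q ^ d - p ^ d = (∑ i ∈ Finset.range d, q ^ i * p ^ (d - 1 - i)) * (q - p) := h.symm
    _ ≤ (∑ _i ∈ Finset.range d, q ^ (d-1)) * (q - p) := by
        apply mul_le_mul_of_nonneg_right _ (by linarith)
        apply Finset.sum_le_sum
        intro i hi
        simp only [Finset.mem_range] at hi
        calc q ^ i * p ^ (d-1-i) ≤ q ^ i * q ^ (d-1-i) := by
              exact mul_le_mul_of_nonneg_left (pow_le_pow_left₀ hp hpq _) (pow_nonneg (hp.trans hpq) _)
          _ = q ^ (d-1) := by rw [← pow_add]; congr 1; omega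
    _ = (d:ℝ) * q ^ (d-1) * (q-p) := by rw [Finset.sum_const, Finset.card_range]; ring

private lemma pott_maj_pow (d : ℕ) {u v u' v' : ℝ} (hv' : 0 ≤ v') (h1 : v' ≤ v) (h2 : v ≤ u)
    (h3 : u ≤ u') (hsum : u + v = u' + v') : u ^ d + v ^ d ≤ u' ^ d + v' ^ d := by
  have hu : 0 ≤ u := le_trans (le_trans hv' h1) h2
  have l1 := pott_pow_diff_lower d hu h3
  have l2 := pott_pow_diff_upper d hv' h1
  have l3 : (d:ℝ) * v ^ (d-1) * (v - v') ≤ (d:ℝ) * u ^ (d-1) * (u' - u) := by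
    have hvu : v ^ (d-1) ≤ u ^ (d-1) := pow_le_pow_left₀ (le_trans hv' h1) h2 _
    have hd0 : (0:ℝ) ≤ (d:ℝ) := Nat.cast_nonneg d
    have hvv : v - v' = u' - u := by linarith
    rw [hvv]
    exact mul_le_mul_of_nonneg_right (mul_le_mul_of_nonneg_left hvu hd0) (by linarith)
  linarith

private lemma pott_rpow_half_sq {a : ℝ} (ha : 0 < a) (d : ℕ) :
    a ^ ((d:ℝ)/2) * a ^ ((d:ℝ)/2) = a ^ d := by
  rw [← Real.rpow_natCast a d, ← Real.rpow_add ha]; ring_nf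

/-- the invariant region `0 ≤ y ≤ 1 - x - y ≤ x ≤ 1`. -/
private def Reg (x y : ℝ) : Prop := 0 ≤ y ∧ y ≤ 1 - x - y ∧ 1 - x - y ≤ x ∧ x ≤ 1

private lemma pott_base_pos {β : ℝ} (hβ0 : 0 < β) (hβ1 : β ≤ 1) {t : ℝ} (ht : t ≤ 1) :
    0 < 1 - (1 - β) * t := by nlinarith

set_option maxHeartbeats 1000000 in
private lemma pott_reg_step {d : ℕ} {β : ℝ} (hβ0 : 0 < β) (hβ1 : β ≤ 1) {x y : ℝ}
    (h : Reg x y) : Reg (fU d β x y) (fL d β x y) := by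
  obtain ⟨h1, h2, h3, h4⟩ := h
  have hy1 : y ≤ 1 := by linarith
  have hz0 : 0 ≤ 1 - x - y := by linarith
  have hz1 : 1 - x - y ≤ 1 := by linarith
  have hx0 : 0 ≤ x := by linarith
  have hbx : 0 < 1 - (1-β)*x := pott_base_pos hβ0 hβ1 h4
  have hby : 0 < 1 - (1-β)*y := pott_base_pos hβ0 hβ1 hy1
  have hbz : 0 < 1 - (1-β)*(1-x-y) := pott_base_pos hβ0 hβ1 hz1
  have hbxz : 1 - (1-β)*x ≤ 1 - (1-β)*(1-x-y) := by nlinarith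
  have hbzy : 1 - (1-β)*(1-x-y) ≤ 1 - (1-β)*y := by nlinarith
  set s : ℝ := (1 - (1-β)*x) ^ ((d:ℝ)/2) with hs_def
  set t : ℝ := (1 - (1-β)*(1-x-y)) ^ ((d:ℝ)/2) with ht_def
  set A : ℝ := (1 - (1-β)*y) ^ d with hA_def
  set B : ℝ := (1 - (1-β)*x) ^ d with hB_def
  set C : ℝ := (1 - (1-β)*(1-x-y)) ^ d with hC_def
  have hs : 0 < s := Real.rpow_pos_of_pos hbx _
  have ht : 0 < t := Real.rpow_pos_of_pos hbz _
  have hst : s ≤ t := Real.rpow_le_rpow hbx.le hbxz (by positivity)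
  have hss : s * s = B := pott_rpow_half_sq hbx d
  have htt : t * t = C := pott_rpow_half_sq hbz d
  have hA : 0 < A := pow_pos hby d
  have hB : 0 < B := pow_pos hbx d
  have hC : 0 < C := pow_pos hbz d
  have hCA : C ≤ A := pow_le_pow_left₀ hbz.le hbzy d
  have hBC : B ≤ C := pow_le_pow_left₀ hbx.le hbxz d
  have hD1 : 0 < A + 2 * s * t := by nlinarith [mul_pos hs ht]
  have hD2 : 0 < B + A + C := by linarith
  have hfU : fU d β x y = A / (A + 2 * s * t) := rfl
  have hfL : fL d β x y = B / (B + A + C) := rfl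
  have hfL0 : 0 ≤ fL d β x y := by
    rw [hfL]; exact le_of_lt (div_pos hB hD2)
  have hfU1 : fU d β x y ≤ 1 := by
    rw [hfU, div_le_one hD1]; nlinarith [mul_pos hs ht]
  have key1 : A / (A + 2*s*t) + (2*B) / (B + A + C) ≤ 1 := by
    rw [div_add_div _ _ hD1.ne' hD2.ne', div_le_one (mul_pos hD1 hD2)]
    rw [← hss, ← htt]
    have hint : 0 ≤ 2*s*(t-s)*(A + t*(t+s)) := by
      apply mul_nonneg (mul_nonneg (by linarith) (by linarith))
      nlinarith [mul_pos ht ht, mul_pos hs ht]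
    linarith [hint]
  have key2 : 1 ≤ (2*A) / (A + 2*s*t) + B / (B + A + C) := by
    rw [div_add_div _ _ hD1.ne' hD2.ne', le_div_iff₀ (mul_pos hD1 hD2)]
    rw [← hss, ← htt]
    have htta : t*t ≤ A := by rw [htt]; exact hCA
    have h1' : 0 ≤ (A - t*t) * (A + t*t + (t-s)^2 + s^2) := by
      apply mul_nonneg (by linarith)
      linarith [mul_pos ht ht, sq_nonneg (t-s), sq_nonneg s]
    have h2' : 0 ≤ (t*t) * (t-s)^2 := by positivity
    linarith [h1', h2']
  have e1 : (2*B) / (B + A + C) = B / (B+A+C) + B / (B+A+C) := by ring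
  have e2 : (2*A) / (A + 2*s*t) = A / (A+2*s*t) + A / (A+2*s*t) := by ring
  refine ⟨hfL0, ?_, ?_, hfU1⟩
  · rw [hfL, hfU]; rw [e1] at key1; linarith
  · rw [hfL, hfU]; rw [e2] at key2; linarith

set_option maxHeartbeats 1000000 in
private lemma pott_fU_lt_one {d : ℕ} {β : ℝ} (hβ0 : 0 < β) (hβ1 : β ≤ 1) {x y : ℝ}
    (h : Reg x y) : fU d β x y < 1 := by
  obtain ⟨h1, h2, h3, h4⟩ := h
  have hbx : 0 < 1 - (1-β)*x := pott_base_pos hβ0 hβ1 h4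
  have hby : 0 < 1 - (1-β)*y := pott_base_pos hβ0 hβ1 (by linarith)
  have hbz : 0 < 1 - (1-β)*(1-x-y) := pott_base_pos hβ0 hβ1 (by linarith)
  have hs : 0 < (1 - (1-β)*x) ^ ((d:ℝ)/2) := Real.rpow_pos_of_pos hbx _
  have ht : 0 < (1 - (1-β)*(1-x-y)) ^ ((d:ℝ)/2) := Real.rpow_pos_of_pos hbz _
  have hA : 0 < (1 - (1-β)*y) ^ d := pow_pos hby d
  have hst := mul_pos hs ht
  unfold fU
  rw [div_lt_one (by nlinarith)]
  nlinarith

set_option maxHeartbeats 1000000 in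
private lemma pott_fL_pos {d : ℕ} {β : ℝ} (hβ0 : 0 < β) (hβ1 : β ≤ 1) {x y : ℝ}
    (h : Reg x y) : 0 < fL d β x y := by
  obtain ⟨h1, h2, h3, h4⟩ := h
  have hbx : 0 < 1 - (1-β)*x := pott_base_pos hβ0 hβ1 h4
  have hby : 0 < 1 - (1-β)*y := pott_base_pos hβ0 hβ1 (by linarith)
  have hbz : 0 < 1 - (1-β)*(1-x-y) := pott_base_pos hβ0 hβ1 (by linarith)
  have hA : 0 < (1 - (1-β)*y) ^ d := pow_pos hby d
  have hB : 0 < (1 - (1-β)*x) ^ d := pow_pos hbx d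
  have hC : 0 < (1 - (1-β)*(1-x-y)) ^ d := pow_pos hbz d
  unfold fL
  exact div_pos hB (by linarith)

set_option maxHeartbeats 1000000 in
private lemma pott_fU_mono {d : ℕ} {β : ℝ} (hβ0 : 0 < β) (hβ1 : β ≤ 1) {x y x' y' : ℝ}
    (h : Reg x y) (h' : Reg x' y') (hxx : x ≤ x') (hyy : y' ≤ y) :
    fU d β x y ≤ fU d β x' y' := by
  obtain ⟨h1, h2, h3, h4⟩ := h
  obtain ⟨h1', h2', h3', h4'⟩ := h'
  have hy'0 : 0 ≤ y' := h1'
  have hy1 : y ≤ 1 := by linarith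
  have hy'1 : y' ≤ 1 := by linarith
  have hx0 : 0 ≤ x := by linarith
  have hx'0 : 0 ≤ x' := by linarith
  have hp : (0:ℝ) ≤ (d:ℝ)/2 := by positivity
  have hbx : 0 < 1 - (1-β)*x := pott_base_pos hβ0 hβ1 h4
  have hbx' : 0 < 1 - (1-β)*x' := pott_base_pos hβ0 hβ1 h4'
  have hby : 0 < 1 - (1-β)*y := pott_base_pos hβ0 hβ1 hy1
  have hby' : 0 < 1 - (1-β)*y' := pott_base_pos hβ0 hβ1 hy'1
  have hbz : 0 < 1 - (1-β)*(1-x-y) := pott_base_pos hβ0 hβ1 (by linarith)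
  have hbz' : 0 < 1 - (1-β)*(1-x'-y) := pott_base_pos hβ0 hβ1 (by linarith)
  have hbz'' : 0 < 1 - (1-β)*(1-x'-y') := pott_base_pos hβ0 hβ1 (by linarith)
  have step1 : fU d β x y ≤ fU d β x' y := by
    set A : ℝ := (1 - (1-β)*y) ^ d with hA_def
    have hA : 0 < A := pow_pos hby d
    have m1 : (1 - (1-β)*x) ^ ((d:ℝ)/2) * (1 - (1-β)*(1-x-y)) ^ ((d:ℝ)/2)
        = ((1 - (1-β)*x) * (1 - (1-β)*(1-x-y))) ^ ((d:ℝ)/2) :=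
      (Real.mul_rpow hbx.le hbz.le).symm
    have m2 : (1 - (1-β)*x') ^ ((d:ℝ)/2) * (1 - (1-β)*(1-x'-y)) ^ ((d:ℝ)/2)
        = ((1 - (1-β)*x') * (1 - (1-β)*(1-x'-y))) ^ ((d:ℝ)/2) :=
      (Real.mul_rpow hbx'.le hbz'.le).symm
    have hP : (1 - (1-β)*x') * (1 - (1-β)*(1-x'-y))
        ≤ (1 - (1-β)*x) * (1 - (1-β)*(1-x-y)) := by
      have h0 : 0 ≤ (1-β)^2 * (x'-x) * (x+x'-(1-y)) := by
        apply mul_nonneg (mul_nonneg (sq_nonneg _) (by linarith)); linarith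
      nlinarith [h0]
    have hPT : ((1 - (1-β)*x') * (1 - (1-β)*(1-x'-y))) ^ ((d:ℝ)/2)
        ≤ ((1 - (1-β)*x) * (1 - (1-β)*(1-x-y))) ^ ((d:ℝ)/2) :=
      Real.rpow_le_rpow (by positivity) hP hp
    have hT2 : (0:ℝ) ≤ ((1 - (1-β)*x') * (1 - (1-β)*(1-x'-y))) ^ ((d:ℝ)/2) :=
      Real.rpow_nonneg (by positivity) _
    show A / (A + 2 * _ * _) ≤ A / (A + 2 * _ * _)
    apply div_le_div_of_nonneg_left hA.le
    · simp only [mul_assoc]; rw [m2]; linarith [hT2]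
    · simp only [mul_assoc]; rw [m1, m2]; linarith [hPT]
  have step2 : fU d β x' y ≤ fU d β x' y' := by
    set s : ℝ := (1 - (1-β)*x') ^ ((d:ℝ)/2) with hs_def
    have hs : 0 < s := Real.rpow_pos_of_pos hbx' _
    have ht1 : 0 < (1 - (1-β)*(1-x'-y')) ^ ((d:ℝ)/2) := Real.rpow_pos_of_pos hbz'' _
    have ht2 : 0 < (1 - (1-β)*(1-x'-y)) ^ ((d:ℝ)/2) := Real.rpow_pos_of_pos hbz' _
    have htle : (1 - (1-β)*(1-x'-y')) ^ ((d:ℝ)/2) ≤ (1 - (1-β)*(1-x'-y)) ^ ((d:ℝ)/2) := by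
      apply Real.rpow_le_rpow hbz''.le _ hp; nlinarith
    have hAle : (1 - (1-β)*y) ^ d ≤ (1 - (1-β)*y') ^ d := by
      apply pow_le_pow_left₀ hby.le _ d; nlinarith
    have hA1 : 0 < (1 - (1-β)*y) ^ d := pow_pos hby d
    have hA2 : 0 < (1 - (1-β)*y') ^ d := pow_pos hby' d
    unfold fU
    rw [div_le_div_iff₀ (by nlinarith [mul_pos (mul_pos hs ht2) hA1, mul_pos hs ht2])
      (by nlinarith [mul_pos hs ht1])]
    have key : (1 - (1-β)*y) ^ d * (s * ((1 - (1-β)*(1-x'-y')) ^ ((d:ℝ)/2)))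
        ≤ (1 - (1-β)*y') ^ d * (s * ((1 - (1-β)*(1-x'-y)) ^ ((d:ℝ)/2))) := by
      apply mul_le_mul hAle (mul_le_mul_of_nonneg_left htle hs.le) (by positivity)
      exact hA2.le
    nlinarith [key]
  exact step1.trans step2

set_option maxHeartbeats 1000000 in
private lemma pott_fL_anti {d : ℕ} {β : ℝ} (hβ0 : 0 < β) (hβ1 : β ≤ 1) {x y x' y' : ℝ}
    (h : Reg x y) (h' : Reg x' y') (hxx : x ≤ x') (hyy : y' ≤ y) :
    fL d β x' y' ≤ fL d β x y := by
  obtain ⟨h1, h2, h3, h4⟩ := h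
  obtain ⟨h1', h2', h3', h4'⟩ := h'
  have hy1 : y ≤ 1 := by linarith
  have hy'1 : y' ≤ 1 := by linarith
  have hx0 : 0 ≤ x := by linarith
  have hx'0 : 0 ≤ x' := by linarith
  have hbx : 0 < 1 - (1-β)*x := pott_base_pos hβ0 hβ1 h4
  have hbx' : 0 < 1 - (1-β)*x' := pott_base_pos hβ0 hβ1 h4'
  have hby : 0 < 1 - (1-β)*y := pott_base_pos hβ0 hβ1 hy1
  have hby' : 0 < 1 - (1-β)*y' := pott_base_pos hβ0 hβ1 hy'1
  have hbz : 0 < 1 - (1-β)*(1-x-y) := pott_base_pos hβ0 hβ1 (by linarith)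
  have hbzx' : 0 < 1 - (1-β)*(1-x-y') := pott_base_pos hβ0 hβ1 (by linarith)
  have hbz'' : 0 < 1 - (1-β)*(1-x'-y') := pott_base_pos hβ0 hβ1 (by linarith)
  have step1 : fL d β x' y' ≤ fL d β x y' := by
    have hB : 0 < (1 - (1-β)*x) ^ d := pow_pos hbx d
    have hB' : 0 < (1 - (1-β)*x') ^ d := pow_pos hbx' d
    have hA : 0 < (1 - (1-β)*y') ^ d := pow_pos hby' d
    have hC : 0 < (1 - (1-β)*(1-x-y')) ^ d := pow_pos hbzx' d
    have hC' : 0 < (1 - (1-β)*(1-x'-y')) ^ d := pow_pos hbz'' d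
    have hBB : (1 - (1-β)*x') ^ d ≤ (1 - (1-β)*x) ^ d :=
      pow_le_pow_left₀ hbx'.le (by nlinarith) d
    have hCC : (1 - (1-β)*(1-x-y')) ^ d ≤ (1 - (1-β)*(1-x'-y')) ^ d :=
      pow_le_pow_left₀ hbzx'.le (by nlinarith) d
    unfold fL
    rw [div_le_div_iff₀ (by linarith) (by linarith)]
    have key : (1 - (1-β)*x') ^ d * (1 - (1-β)*(1-x-y')) ^ d
        ≤ (1 - (1-β)*x) ^ d * (1 - (1-β)*(1-x'-y')) ^ d :=
      mul_le_mul hBB hCC hC.le hB.le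
    have key2 : (1 - (1-β)*x') ^ d * (1 - (1-β)*y') ^ d
        ≤ (1 - (1-β)*x) ^ d * (1 - (1-β)*y') ^ d :=
      mul_le_mul_of_nonneg_right hBB hA.le
    nlinarith [key, key2]
  have step2 : fL d β x y' ≤ fL d β x y := by
    have hB : 0 < (1 - (1-β)*x) ^ d := pow_pos hbx d
    have hmaj : (1 - (1-β)*y) ^ d + (1 - (1-β)*(1-x-y)) ^ d
        ≤ (1 - (1-β)*y') ^ d + (1 - (1-β)*(1-x-y')) ^ d := by
      apply pott_maj_pow d hbzx'.le (by nlinarith) (by nlinarith) (by nlinarith) (by ring)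
    unfold fL
    apply div_le_div_of_nonneg_left hB.le
    · have := pow_pos hby d
      have := pow_pos hbz d
      linarith
    · linarith
  exact step1.trans step2


set_option maxHeartbeats 1000000

/-- For any `d ≥ 2` and `0 < β ≤ 1`, the limits `u_∞ = lim u_n` and `ℓ_∞ = lim ℓ_n`
exist, and `(x,y) = (u_∞, ℓ_∞)` solves `f_u(d,β,x,y) = x`, `f_ℓ(d,β,x,y) = y`
with `0 < y ≤ 1 - x - y ≤ x < 1`. -/

theorem ulSeq_limits_fixed_point (d : ℕ) (hd : 2 ≤ d) (β : ℝ) (hβ0 : 0 < β) (hβ1 : β ≤ 1) :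
    ∃ x y : ℝ,
      Filter.Tendsto (fun n : ℕ => (ulSeq d β n).1) Filter.atTop (nhds x) ∧
      Filter.Tendsto (fun n : ℕ => (ulSeq d β n).2) Filter.atTop (nhds y) ∧
      fU d β x y = x ∧ fL d β x y = y ∧
      0 < y ∧ y ≤ 1 - x - y ∧ 1 - x - y ≤ x ∧ x < 1 := by
  set u : ℕ → ℝ := fun n : ℕ => (ulSeq d β n).1 with hu_def
  set l : ℕ → ℝ := fun n : ℕ => (ulSeq d β n).2 with hl_def
  have hstep : ∀ n, u (n+1) = fU d β (u n) (l n) ∧ l (n+1) = fL d β (u n) (l n) :=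
    fun n => ⟨rfl, rfl⟩
  have hP : ∀ n, Reg (u n) (l n) ∧ u (n+1) ≤ u n ∧ l n ≤ l (n+1) := by
    intro n
    induction n with
    | zero =>
      have hreg0 : Reg (u 0) (l 0) := by
        have e1 : u 0 = 1 := rfl
        have e2 : l 0 = 0 := rfl
        refine ⟨?_, ?_, ?_, ?_⟩ <;> simp only [e1, e2] <;> norm_num
      have hreg1 := pott_reg_step (d := d) hβ0 hβ1 hreg0
      refine ⟨hreg0, ?_, ?_⟩
      · show fU d β (u 0) (l 0) ≤ 1
        exact hreg1.2.2.2
      · show (0:ℝ) ≤ fL d β (u 0) (l 0)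
        exact hreg1.1
    | succ n ih =>
      obtain ⟨hreg, hu1, hl1⟩ := ih
      have hreg1 : Reg (u (n+1)) (l (n+1)) := by
        rw [(hstep n).1, (hstep n).2]; exact pott_reg_step hβ0 hβ1 hreg
      refine ⟨hreg1, ?_, ?_⟩
      · rw [(hstep (n+1)).1]
        calc fU d β (u (n+1)) (l (n+1)) ≤ fU d β (u n) (l n) :=
              pott_fU_mono hβ0 hβ1 hreg1 hreg hu1 hl1
          _ = u (n+1) := ((hstep n).1).symm
      · rw [(hstep (n+1)).2]
        calc l (n+1) = fL d β (u n) (l n) := (hstep n).2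
          _ ≤ fL d β (u (n+1)) (l (n+1)) :=
              pott_fL_anti hβ0 hβ1 hreg1 hreg hu1 hl1
  have hanti : Antitone u := antitone_nat_of_succ_le (fun n => (hP n).2.1)
  have hmono : Monotone l := monotone_nat_of_le_succ (fun n => (hP n).2.2)
  have hu0 : ∀ n, 0 ≤ u n := by
    intro n; obtain ⟨⟨a, b, c, e⟩, -, -⟩ := hP n; linarith
  have hl1b : ∀ n, l n ≤ 1 := by
    intro n; obtain ⟨⟨a, b, c, e⟩, -, -⟩ := hP n; linarith
  have hbb : BddBelow (Set.range u) := ⟨0, by rintro _ ⟨n, rfl⟩; exact hu0 n⟩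
  have hba : BddAbove (Set.range l) := ⟨1, by rintro _ ⟨n, rfl⟩; exact hl1b n⟩
  set X : ℝ := ⨅ n, u n with hX_def
  set Y : ℝ := ⨆ n, l n with hY_def
  have htu : Filter.Tendsto u atTop (nhds X) := tendsto_atTop_ciInf hanti hbb
  have htl : Filter.Tendsto l atTop (nhds Y) := tendsto_atTop_ciSup hmono hba
  -- region bounds at the limit
  have hY0 : 0 ≤ Y := ge_of_tendsto' htl (fun n => (hP n).1.1)
  have hr2 : Y ≤ 1 - X - Y :=
    le_of_tendsto_of_tendsto' htl ((tendsto_const_nhds.sub htu).sub htl)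
      (fun n => (hP n).1.2.1)
  have hr3 : 1 - X - Y ≤ X :=
    le_of_tendsto_of_tendsto' ((tendsto_const_nhds.sub htu).sub htl) htu
      (fun n => (hP n).1.2.2.1)
  have hr4 : X ≤ 1 := le_of_tendsto' htu (fun n => (hP n).1.2.2.2)
  have hY1 : Y ≤ 1 := by linarith
  have hbX : 0 < 1 - (1-β)*X := pott_base_pos hβ0 hβ1 hr4
  have hbY : 0 < 1 - (1-β)*Y := pott_base_pos hβ0 hβ1 hY1
  have hbZ : 0 < 1 - (1-β)*(1-X-Y) := pott_base_pos hβ0 hβ1 (by linarith)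
  -- continuity
  have tsu : Filter.Tendsto (fun n => 1 - (1-β) * u n) atTop (nhds (1 - (1-β)*X)) :=
    (htu.const_mul (1-β)).const_sub 1
  have tsl : Filter.Tendsto (fun n => 1 - (1-β) * l n) atTop (nhds (1 - (1-β)*Y)) :=
    (htl.const_mul (1-β)).const_sub 1
  have tsz : Filter.Tendsto (fun n => 1 - (1-β) * (1 - u n - l n)) atTop
      (nhds (1 - (1-β)*(1-X-Y))) :=
    ((((tendsto_const_nhds.sub htu).sub htl).const_mul (1-β)).const_sub 1)
  have tA : Filter.Tendsto (fun n => (1 - (1-β) * l n)^d) atTop (nhds ((1-(1-β)*Y)^d)) :=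
    tsl.pow d
  have tB : Filter.Tendsto (fun n => (1 - (1-β) * u n)^d) atTop (nhds ((1-(1-β)*X)^d)) :=
    tsu.pow d
  have tC : Filter.Tendsto (fun n => (1 - (1-β) * (1 - u n - l n))^d) atTop
      (nhds ((1-(1-β)*(1-X-Y))^d)) := tsz.pow d
  have ts : Filter.Tendsto (fun n => (1 - (1-β) * u n) ^ ((d:ℝ)/2)) atTop
      (nhds ((1-(1-β)*X) ^ ((d:ℝ)/2))) := tsu.rpow_const (Or.inl hbX.ne')
  have tt : Filter.Tendsto (fun n => (1 - (1-β) * (1 - u n - l n)) ^ ((d:ℝ)/2)) atTop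
      (nhds ((1-(1-β)*(1-X-Y)) ^ ((d:ℝ)/2))) := tsz.rpow_const (Or.inl hbZ.ne')
  have hsI : 0 < (1-(1-β)*X) ^ ((d:ℝ)/2) := Real.rpow_pos_of_pos hbX _
  have htI : 0 < (1-(1-β)*(1-X-Y)) ^ ((d:ℝ)/2) := Real.rpow_pos_of_pos hbZ _
  have hAI : 0 < (1-(1-β)*Y)^d := pow_pos hbY d
  have hBI : 0 < (1-(1-β)*X)^d := pow_pos hbX d
  have hCI : 0 < (1-(1-β)*(1-X-Y))^d := pow_pos hbZ d
  have hDU : ((1-(1-β)*Y)^d + 2 * ((1-(1-β)*X) ^ ((d:ℝ)/2)) *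
      ((1-(1-β)*(1-X-Y)) ^ ((d:ℝ)/2))) ≠ 0 := by
    have := mul_pos hsI htI; nlinarith
  have hDL : ((1-(1-β)*X)^d + (1-(1-β)*Y)^d + (1-(1-β)*(1-X-Y))^d) ≠ 0 := by
    positivity
  have tfU : Filter.Tendsto (fun n => fU d β (u n) (l n)) atTop (nhds (fU d β X Y)) := by
    unfold fU
    exact tA.div (tA.add ((ts.const_mul 2).mul tt)) hDU
  have tfL : Filter.Tendsto (fun n => fL d β (u n) (l n)) atTop (nhds (fL d β X Y)) := by
    unfold fL
    exact tB.div ((tB.add tA).add tC) hDL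
  have hshiftu : Filter.Tendsto (fun n => u (n+1)) atTop (nhds X) :=
    htu.comp (tendsto_add_atTop_nat 1)
  have hshiftl : Filter.Tendsto (fun n => l (n+1)) atTop (nhds Y) :=
    htl.comp (tendsto_add_atTop_nat 1)
  have hfuX : fU d β X Y = X := by
    apply tendsto_nhds_unique tfU
    have e : (fun n => u (n+1)) = fun n => fU d β (u n) (l n) :=
      funext fun n => (hstep n).1
    rw [← e]; exact hshiftu
  have hflY : fL d β X Y = Y := by
    apply tendsto_nhds_unique tfL
    have e : (fun n => l (n+1)) = fun n => fL d β (u n) (l n) :=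
      funext fun n => (hstep n).2
    rw [← e]; exact hshiftl
  -- strict bounds
  have hXle : X ≤ u 1 := ciInf_le hbb 1
  have hYge : l 1 ≤ Y := le_ciSup hba 1
  have hu1lt : u 1 < 1 := by
    rw [(hstep 0).1]; exact pott_fU_lt_one hβ0 hβ1 (hP 0).1
  have hl1pos : 0 < l 1 := by
    rw [(hstep 0).2]; exact pott_fL_pos hβ0 hβ1 (hP 0).1
  exact ⟨X, Y, htu, htl, hfuX, hflY, lt_of_lt_of_le hl1pos hYge, hr2, hr3,
    lt_of_le_of_lt hXle hu1lt⟩
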